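/- Fix a horizon N ≥ 1 and σ > 0. Let μ be a probability measure on X₀; for k = 1, …, N let κ_k, κ̄_k be Markov kernels such that D_KL(κ_k(h) ‖ κ̄_k(h)) ≤ η_k for every history h, and let ℓ_k, δc_k be measurable real-valued functions of the history with |δc_k| ≤ Δ_k pointwise. Form the augmented kernels κ_k^aug(h) = κ_k(h) ⊗ N(ℓ_k(h) + δc_k(h), σ²) and κ̄_k^aug(h) = κ̄_k(h) ⊗ N(ℓ_k(h), σ²). Then the augmented path measures satisfy D_KL(μ ⊗ κ₁^aug ⊗ ⋯ ⊗ κ_N^aug ‖ μ ⊗ κ̄₁^aug ⊗ ⋯ ⊗ κ̄_N^aug) ≤ ∑_{k=1}^N (η_k + Δ_k²/(2σ²)). -/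

import Mathlib

open MeasureTheory ProbabilityTheory Real

open scoped Classical in
/-- The Kullback–Leibler divergence of `p` with respect to `q`, valued in `EReal`:
it is `∫ log (dp/dq) dp` when `p ≪ q` and this integral exists, and `+∞` otherwise. -/
noncomputable def klDiv {α : Type*} [MeasurableSpace α] (p q : Measure α) : EReal :=
  if p ≪ q ∧ Integrable (llr p q) p then ((∫ x, llr p q x ∂p : ℝ) : EReal) else ⊤

/-- The space of augmented histories up to time `k`: at each step `k ≥ 1` the state is augmented
with a real-valued running-cost coordinate. -/
def AugPathSpace (X : ℕ → Type) : ℕ → Type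
  | 0 => X 0
  | k + 1 => AugPathSpace X k × (X (k + 1) × ℝ)

instance AugPathSpace.instMeasurableSpace (X : ℕ → Type) [∀ k, MeasurableSpace (X k)] :
    ∀ k, MeasurableSpace (AugPathSpace X k)
  | 0 => inferInstanceAs (MeasurableSpace (X 0))
  | k + 1 => @Prod.instMeasurableSpace _ _ (AugPathSpace.instMeasurableSpace X k)
      inferInstance

open scoped ProbabilityTheory in
/-- The augmented path measure over horizon `k`, obtained by iterated composition-product of an
initial measure with augmented Markov kernels. -/
noncomputable def augPathMeasure {X : ℕ → Type} [∀ k, MeasurableSpace (X k)]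
    (μ : Measure (X 0))
    (κ : ∀ k, ProbabilityTheory.Kernel (AugPathSpace X k) (X (k + 1) × ℝ)) :
    ∀ k, Measure (AugPathSpace X k)
  | 0 => μ
  | k + 1 => (augPathMeasure μ κ k) ⊗ₘ (κ k)

/-! The augmented kernels are products, so each step's divergence splits into the dynamics term,
at most `η`, and the divergence between two Gaussians of equal variance, which is
`(δc)² / (2σ²)` because one is an exponential tilt of the other. The chain rule for
composition-products adds these bounds along the horizon. The histories live in arbitrary
measurable spaces, where the conditional term `D(μ ⊗ κ ‖ μ ⊗ η)` need not disintegrate into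
fibrewise divergences; it is bounded through the Donsker–Varadhan variational formula instead,
applied in each fibre and then, by Jensen's inequality for `log`, on the whole product. -/

open scoped ENNReal NNReal
open Filter

namespace InformationTheory

variable {α β : Type*} [MeasurableSpace α] [MeasurableSpace β]

lemma integrable_of_abs_le {μ : Measure α} [IsFiniteMeasure μ] {f : α → ℝ} {C : ℝ}
    (hf : Measurable f) (hC : ∀ x, |f x| ≤ C) : Integrable f μ :=
  .of_bound hf.aestronglyMeasurable C (ae_of_all _ hC)

lemma integrable_exp_of_abs_le {μ : Measure α} [IsFiniteMeasure μ] {f : α → ℝ} {C : ℝ}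
    (hf : Measurable f) (hC : ∀ x, |f x| ≤ C) : Integrable (fun x ↦ exp (f x)) μ :=
  integrable_of_abs_le hf.exp (C := exp C) fun x ↦ by
    rw [abs_exp, exp_le_exp]; exact (le_abs_self _).trans (hC x)

lemma abs_log_integral_exp_le {μ : Measure α} [IsProbabilityMeasure μ] {f : α → ℝ} {C : ℝ}
    (hf : Measurable f) (hC : ∀ x, |f x| ≤ C) : |log (∫ x, exp (f x) ∂μ)| ≤ C := by
  have hint := integrable_exp_of_abs_le (μ := μ) hf hC
  have hlo : exp (-C) ≤ ∫ x, exp (f x) ∂μ := by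
    simpa using integral_mono (integrable_const (exp (-C))) hint
      fun x ↦ exp_le_exp.mpr (neg_le_of_abs_le (hC x))
  have hhi : ∫ x, exp (f x) ∂μ ≤ exp C := by
    simpa using integral_mono hint (integrable_const (exp C))
      fun x ↦ exp_le_exp.mpr ((le_abs_self _).trans (hC x))
  rw [abs_le]
  constructor
  · simpa using log_le_log (exp_pos _) hlo
  · simpa using log_le_log ((exp_pos _).trans_le hlo) hhi

lemma integral_le_toReal_klDiv_add_log_integral_exp {p q : Measure α}
    [IsProbabilityMeasure p] [IsProbabilityMeasure q] (hpq : klDiv p q ≠ ∞) {f : α → ℝ}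
    (hf : Integrable f p) (hexp : Integrable (fun x ↦ exp (f x)) q) :
    ∫ x, f x ∂p ≤ (klDiv p q).toReal + log (∫ x, exp (f x) ∂q) := by
  obtain ⟨hac, hllr⟩ := klDiv_ne_top_iff.mp hpq
  have := isProbabilityMeasure_tilted hexp
  -- Gibbs' inequality for `p` against `q.tilted f`
  have hgibbs := integral_llr_add_sub_measure_univ_nonneg
    (hac.trans (absolutelyContinuous_tilted hexp)) (integrable_llr_tilted_right hac hf hllr hexp)
  rw [integral_llr_tilted_right hac hf hexp hllr] at hgibbs
  rw [toReal_klDiv hac hllr]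
  simp only [probReal_univ] at hgibbs ⊢
  linarith

lemma integral_le_log_integral_exp {μ : Measure α} [IsProbabilityMeasure μ] {f : α → ℝ}
    (hf : Integrable f μ) (hexp : Integrable (fun x ↦ exp (f x)) μ) :
    ∫ x, f x ∂μ ≤ log (∫ x, exp (f x) ∂μ) := by
  simpa [klDiv_self] using
    integral_le_toReal_klDiv_add_log_integral_exp (by simp [klDiv_self]) hf hexp

noncomputable def truncLog (n : ℕ) (r : ℝ) : ℝ := log (max (exp (-n)) (min r (exp n)))

lemma measurable_truncLog (n : ℕ) : Measurable (truncLog n) :=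
  (measurable_const.max (measurable_id.min measurable_const)).log

lemma exp_truncLog (n : ℕ) (r : ℝ) : exp (truncLog n r) = max (exp (-n)) (min r (exp n)) :=
  exp_log (lt_max_of_lt_left (exp_pos _))

lemma abs_truncLog_le (n : ℕ) (r : ℝ) : |truncLog n r| ≤ n := by
  rw [abs_le, ← exp_le_exp, ← exp_le_exp (y := (n : ℝ)), exp_truncLog]
  exact ⟨le_max_left _ _, max_le (exp_le_exp.mpr (by simp)) (min_le_right _ _)⟩

lemma exp_truncLog_le {r : ℝ} (hr : 0 ≤ r) (n : ℕ) : exp (truncLog n r) ≤ r + exp (-n) := by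
  rw [exp_truncLog]
  exact max_le (by linarith) ((min_le_left _ _).trans (by linarith [exp_pos (-(n : ℝ))]))

lemma mul_truncLog_add_one_sub_nonneg {r : ℝ} (hr : 0 ≤ r) {n : ℕ} (hn : 1 ≤ n) :
    0 ≤ r * truncLog n r + 1 - r := by
  rcases le_or_gt r (exp n) with hle | hlt
  · rcases hr.eq_or_lt with rfl | hpos
    · simp
    have hlog : log r ≤ truncLog n r :=
      log_le_log hpos (le_max_of_le_right (le_min le_rfl hle))
    have := klFun_nonneg hr
    rw [klFun_apply] at this
    nlinarith
  · have htrunc : truncLog n r = n := by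
      rw [truncLog, min_eq_right hlt.le, max_eq_right (exp_le_exp.mpr (by simp)), log_exp]
    rw [htrunc]
    nlinarith [(Nat.one_le_cast (α := ℝ)).mpr hn]

lemma eventually_mul_truncLog_add_one_sub_eq_klFun {r : ℝ} (hr : 0 ≤ r) :
    ∀ᶠ n in atTop, r * truncLog n r + 1 - r = klFun r := by
  rcases hr.eq_or_lt with rfl | hpos
  · simp [klFun_zero]
  filter_upwards [eventually_ge_atTop ⌈|log r|⌉₊] with n hn
  have habs : |log r| ≤ n := (Nat.le_ceil _).trans (by exact_mod_cast hn)
  have hlo : exp (-n) ≤ r := by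
    rw [← exp_log hpos, exp_le_exp]; linarith [neg_abs_le (log r)]
  have hhi : r ≤ exp n := by
    rw [← exp_log hpos, exp_le_exp]; linarith [le_abs_self (log r)]
  rw [truncLog, min_eq_left hhi, max_eq_right hlo, klFun_apply]

lemma log_integral_exp_truncLog_rnDeriv_le {p q : Measure α} [IsProbabilityMeasure p]
    [IsProbabilityMeasure q] (hpq : p ≪ q) (n : ℕ) :
    log (∫ x, exp (truncLog n (p.rnDeriv q x).toReal) ∂q) ≤ exp (-n) := by
  have hr_int : Integrable (fun x ↦ (p.rnDeriv q x).toReal) q := Measure.integrable_toReal_rnDeriv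
  have hexp_int : Integrable (fun x ↦ exp (truncLog n (p.rnDeriv q x).toReal)) q :=
    integrable_exp_of_abs_le
      ((measurable_truncLog n).comp (Measure.measurable_rnDeriv p q).ennreal_toReal)
      fun x ↦ abs_truncLog_le n _
  have hle : ∫ x, exp (truncLog n (p.rnDeriv q x).toReal) ∂q ≤ 1 + exp (-n) :=
    calc _ ≤ ∫ x, ((p.rnDeriv q x).toReal + exp (-n)) ∂q :=
          integral_mono hexp_int (hr_int.add (integrable_const _))
            fun x ↦ exp_truncLog_le ENNReal.toReal_nonneg n
      _ = 1 + exp (-n) := by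
          rw [integral_add hr_int (integrable_const _), Measure.integral_toReal_rnDeriv hpq]
          simp
  calc _ ≤ log (1 + exp (-n)) := log_le_log (integral_exp_pos hexp_int) hle
    _ ≤ exp (-n) := by linarith [log_le_sub_one_of_pos (by positivity : (0 : ℝ) < 1 + exp (-n))]

lemma lintegral_ofReal_mul_truncLog_rnDeriv {p q : Measure α} [IsProbabilityMeasure p]
    [IsProbabilityMeasure q] (hpq : p ≪ q) {n : ℕ} (hn : 1 ≤ n) :
    ∫⁻ x, ENNReal.ofReal ((p.rnDeriv q x).toReal * truncLog n (p.rnDeriv q x).toReal + 1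
      - (p.rnDeriv q x).toReal) ∂q
      = ENNReal.ofReal (∫ x, truncLog n (p.rnDeriv q x).toReal ∂p) := by
  set r : α → ℝ := fun x ↦ (p.rnDeriv q x).toReal
  have hr_int : Integrable r q := Measure.integrable_toReal_rnDeriv
  have hmul_int : Integrable (fun x ↦ r x * truncLog n (r x)) q :=
    (integrable_rnDeriv_smul_iff hpq).mpr <| integrable_of_abs_le
      ((measurable_truncLog n).comp (Measure.measurable_rnDeriv p q).ennreal_toReal)
      fun x ↦ abs_truncLog_le n _
  have hadd_int : Integrable (fun x ↦ r x * truncLog n (r x) + 1) q :=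
    hmul_int.add (integrable_const _)
  have hint : Integrable (fun x ↦ r x * truncLog n (r x) + 1 - r x) q := hadd_int.sub hr_int
  show ∫⁻ x, ENNReal.ofReal (r x * truncLog n (r x) + 1 - r x) ∂q
    = ENNReal.ofReal (∫ x, truncLog n (r x) ∂p)
  rw [← ofReal_integral_eq_lintegral_ofReal hint
      (ae_of_all _ fun x ↦ mul_truncLog_add_one_sub_nonneg ENNReal.toReal_nonneg hn),
    integral_sub hadd_int hr_int, integral_add hmul_int (integrable_const _),
    Measure.integral_toReal_rnDeriv hpq]
  have hsmul : ∫ x, r x * truncLog n (r x) ∂q = ∫ x, truncLog n (r x) ∂p :=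
    integral_rnDeriv_smul hpq
  simp [hsmul]

lemma klDiv_le_ofReal_of_forall_integral_le {p q : Measure α}
    [IsProbabilityMeasure p] [IsProbabilityMeasure q] (hpq : p ≪ q) (K : ℝ)
    (h : ∀ g : α → ℝ, Measurable g → (∃ C, ∀ x, |g x| ≤ C) →
      ∫ x, g x ∂p ≤ K + log (∫ x, exp (g x) ∂q)) :
    klDiv p q ≤ ENNReal.ofReal K := by
  set r : α → ℝ := fun x ↦ (p.rnDeriv q x).toReal
  have hr_meas : Measurable r := (Measure.measurable_rnDeriv p q).ennreal_toReal
  have hbound : ∀ n : ℕ, ∫ x, truncLog n (r x) ∂p ≤ K + exp (-n) := fun n ↦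
    (h _ ((measurable_truncLog n).comp hr_meas) ⟨n, fun x ↦ abs_truncLog_le n _⟩).trans
      (by gcongr; exact log_integral_exp_truncLog_rnDeriv_le hpq n)
  -- `truncLog n ∘ r` are bounded test functions tending to `llr p q`, and the nonnegative
  -- integrands `r * truncLog n r + 1 - r` tend to `klFun r`, so Fatou's lemma applies.
  rw [klDiv_eq_lintegral_klFun_of_ac hpq]
  calc ∫⁻ x, ENNReal.ofReal (klFun (r x)) ∂q
      = ∫⁻ x, liminf (fun n : ℕ ↦ ENNReal.ofReal (r x * truncLog n (r x) + 1 - r x)) atTop ∂q :=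
        lintegral_congr fun x ↦ by
          rw [liminf_congr ((eventually_mul_truncLog_add_one_sub_eq_klFun
            ENNReal.toReal_nonneg).mono fun n hn ↦ by rw [hn]), liminf_const]
    _ ≤ liminf (fun n : ℕ ↦ ∫⁻ x, ENNReal.ofReal (r x * truncLog n (r x) + 1 - r x) ∂q) atTop :=
        lintegral_liminf_le fun n ↦
          ((hr_meas.mul ((measurable_truncLog n).comp hr_meas)).add_const _
            |>.sub hr_meas).ennreal_ofReal
    _ ≤ liminf (fun n : ℕ ↦ ENNReal.ofReal (K + exp (-n))) atTop :=
        liminf_le_liminf ((eventually_ge_atTop 1).mono fun n hn ↦ by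
          rw [lintegral_ofReal_mul_truncLog_rnDeriv hpq hn]
          exact ENNReal.ofReal_le_ofReal (hbound n))
    _ = ENNReal.ofReal K := by
        refine Tendsto.liminf_eq (ENNReal.tendsto_ofReal ?_)
        simpa using tendsto_const_nhds.add
          (tendsto_exp_neg_atTop_nhds_zero.comp tendsto_natCast_atTop_atTop)

lemma integral_compProd_le_toReal_add_log_integral_exp {μ : Measure α} [IsProbabilityMeasure μ]
    {κ η : Kernel α β} [IsMarkovKernel κ] [IsMarkovKernel η] {B : ℝ≥0∞} (hB : B ≠ ∞)
    (h : ∀ a, klDiv (κ a) (η a) ≤ B) {g : α × β → ℝ} (hg : Measurable g) {C : ℝ}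
    (hC : ∀ z, |g z| ≤ C) :
    ∫ z, g z ∂(μ ⊗ₘ κ) ≤ B.toReal + log (∫ z, exp (g z) ∂(μ ⊗ₘ η)) := by
  have hsec : ∀ a, Measurable fun b ↦ g (a, b) := fun a ↦ hg.comp measurable_prodMk_left
  set G : α → ℝ := fun a ↦ log (∫ b, exp (g (a, b)) ∂η a)
  have hG_meas : Measurable G :=
    (hg.exp.stronglyMeasurable.integral_kernel_prod_right' (κ := η)).measurable.log
  have hG_bound : ∀ a, |G a| ≤ C := fun a ↦ abs_log_integral_exp_le (hsec a) fun b ↦ hC (a, b)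
  have hH_meas : Measurable fun a ↦ ∫ b, g (a, b) ∂κ a :=
    (hg.stronglyMeasurable.integral_kernel_prod_right' (κ := κ)).measurable
  have hH_bound : ∀ a, |∫ b, g (a, b) ∂κ a| ≤ C := fun a ↦ by
    simpa using norm_integral_le_of_norm_le_const (μ := κ a) (f := fun b ↦ g (a, b))
      (ae_of_all _ fun b ↦ hC (a, b))
  have hfiber : ∀ a, ∫ b, g (a, b) ∂κ a ≤ B.toReal + G a := fun a ↦
    (integral_le_toReal_klDiv_add_log_integral_exp (ne_top_of_le_ne_top hB (h a))
      (integrable_of_abs_le (hsec a) fun b ↦ hC (a, b))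
      (integrable_exp_of_abs_le (hsec a) fun b ↦ hC (a, b))).trans
      (by gcongr; exact h a)
  have hexpG : ∀ a, exp (G a) = ∫ b, exp (g (a, b)) ∂η a := fun a ↦
    exp_log (integral_exp_pos (integrable_exp_of_abs_le (hsec a) fun b ↦ hC (a, b)))
  calc ∫ z, g z ∂(μ ⊗ₘ κ) = ∫ a, ∫ b, g (a, b) ∂κ a ∂μ :=
        Measure.integral_compProd (integrable_of_abs_le hg hC)
    _ ≤ ∫ a, (B.toReal + G a) ∂μ :=
        integral_mono (integrable_of_abs_le hH_meas hH_bound)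
          ((integrable_const _).add (integrable_of_abs_le hG_meas hG_bound)) hfiber
    _ = B.toReal + ∫ a, G a ∂μ := by
        rw [integral_add (integrable_const _) (integrable_of_abs_le hG_meas hG_bound)]
        simp
    _ ≤ B.toReal + log (∫ a, exp (G a) ∂μ) := by
        gcongr
        exact integral_le_log_integral_exp (integrable_of_abs_le hG_meas hG_bound)
          (integrable_exp_of_abs_le hG_meas hG_bound)
    _ = B.toReal + log (∫ z, exp (g z) ∂(μ ⊗ₘ η)) := by
        rw [Measure.integral_compProd (integrable_exp_of_abs_le hg hC)]
        simp_rw [hexpG]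

lemma klDiv_compProd_le_of_forall_le {μ : Measure α} [IsProbabilityMeasure μ]
    {κ η : Kernel α β} [IsMarkovKernel κ] [IsMarkovKernel η] {B : ℝ≥0∞}
    (h : ∀ a, klDiv (κ a) (η a) ≤ B) : klDiv (μ ⊗ₘ κ) (μ ⊗ₘ η) ≤ B := by
  rcases eq_or_ne B ∞ with rfl | hB
  · exact le_top
  have hac : μ ⊗ₘ κ ≪ μ ⊗ₘ η := Measure.AbsolutelyContinuous.compProd_right
    (ae_of_all _ fun a ↦ (klDiv_ne_top_iff.mp (ne_top_of_le_ne_top hB (h a))).1)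
  rw [← ENNReal.ofReal_toReal hB]
  exact klDiv_le_ofReal_of_forall_integral_le hac _ fun g hg ⟨C, hC⟩ ↦
    integral_compProd_le_toReal_add_log_integral_exp hB h hg hC

lemma klDiv_compProd_le_add {μ ν : Measure α} [IsProbabilityMeasure μ] [IsProbabilityMeasure ν]
    {κ η : Kernel α β} [IsMarkovKernel κ] [IsMarkovKernel η] {B : ℝ≥0∞}
    (h : ∀ a, klDiv (κ a) (η a) ≤ B) : klDiv (μ ⊗ₘ κ) (ν ⊗ₘ η) ≤ klDiv μ ν + B := by
  rw [klDiv_compProd_eq_add]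
  gcongr
  exact klDiv_compProd_le_of_forall_le h

lemma klDiv_prod_le_add {p₁ q₁ : Measure α} {p₂ q₂ : Measure β}
    [IsProbabilityMeasure p₁] [IsProbabilityMeasure q₁]
    [IsProbabilityMeasure p₂] [IsProbabilityMeasure q₂] :
    klDiv (p₁.prod p₂) (q₁.prod q₂) ≤ klDiv p₁ q₁ + klDiv p₂ q₂ := by
  rw [← Measure.compProd_const, ← Measure.compProd_const]
  exact klDiv_compProd_le_add fun _ ↦ by simp [Kernel.const_apply]

lemma gaussianReal_eq_tilted (m₁ m₂ : ℝ) {v : ℝ≥0} (hv : v ≠ 0) :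
    gaussianReal m₁ v = (gaussianReal m₂ v).tilted fun x ↦ (m₁ - m₂) / v * x := by
  have hmgf : ∫ x, exp ((m₁ - m₂) / v * x) ∂gaussianReal m₂ v
      = exp (m₂ * ((m₁ - m₂) / v) + v * ((m₁ - m₂) / v) ^ 2 / 2) :=
    congrFun mgf_fun_id_gaussianReal _
  rw [Measure.tilted, hmgf, gaussianReal_of_var_ne_zero _ hv, gaussianReal_of_var_ne_zero _ hv,
    ← withDensity_mul _ (measurable_gaussianPDF _ _) (by fun_prop)]
  refine withDensity_congr_ae (ae_of_all _ fun x ↦ ?_)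
  simp only [Pi.mul_apply, gaussianPDF, gaussianPDFReal]
  rw [← ENNReal.ofReal_mul (by positivity)]
  congr 1
  have hv' : (v : ℝ) ≠ 0 := NNReal.coe_ne_zero.mpr hv
  rw [← exp_sub, mul_assoc _ (exp _), ← exp_add]
  congr 2
  field_simp
  ring

lemma klDiv_gaussianReal (m₁ m₂ : ℝ) {v : ℝ≥0} (hv : v ≠ 0) :
    klDiv (gaussianReal m₁ v) (gaussianReal m₂ v) = ENNReal.ofReal ((m₁ - m₂) ^ 2 / (2 * v)) := by
  set t := (m₁ - m₂) / v
  -- the log-moment generating function of `gaussianReal m₂ v` at `t`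
  set c := m₂ * t + v * t ^ 2 / 2
  have hexp : Integrable (fun x ↦ exp (t * x)) (gaussianReal m₂ v) :=
    integrable_exp_mul_gaussianReal t
  have hmgf : log (∫ x, exp (t * x) ∂gaussianReal m₂ v) = c := by
    rw [show ∫ x, exp (t * x) ∂gaussianReal m₂ v = exp c from congrFun mgf_fun_id_gaussianReal t,
      log_exp]
  have hac : gaussianReal m₁ v ≪ gaussianReal m₂ v := by
    rw [gaussianReal_eq_tilted m₁ m₂ hv]
    exact tilted_absolutelyContinuous _ _
  have hllr : llr (gaussianReal m₁ v) (gaussianReal m₂ v)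
      =ᵐ[gaussianReal m₁ v] fun x ↦ t * x - c := by
    rw [← hmgf]
    filter_upwards [hac.ae_le (log_rnDeriv_tilted_left_self hexp)] with x hx
    rw [llr, gaussianReal_eq_tilted m₁ m₂ hv]
    exact hx
  have hid : Integrable (fun x ↦ t * x) (gaussianReal m₁ v) :=
    ((memLp_id_gaussianReal 1).integrable le_rfl).const_mul t
  rw [klDiv_of_ac_of_integrable hac ((hid.sub (integrable_const c)).congr hllr.symm),
    integral_congr_ae hllr, integral_sub hid (integrable_const c), integral_const_mul,
    integral_id_gaussianReal]
  congr 1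
  have hv' : (v : ℝ) ≠ 0 := NNReal.coe_ne_zero.mpr hv
  simp only [probReal_univ, smul_eq_mul, one_mul, integral_const, c, t]
  field_simp
  ring

lemma klDiv_gaussianReal_add_le (m : ℝ) {δ Δ : ℝ} (hδ : |δ| ≤ Δ) {v : ℝ≥0} (hv : v ≠ 0) :
    klDiv (gaussianReal (m + δ) v) (gaussianReal m v) ≤ ENNReal.ofReal (Δ ^ 2 / (2 * v)) := by
  rw [klDiv_gaussianReal _ _ hv, add_sub_cancel_left, ← sq_abs]
  gcongr

end InformationTheory

section Comparison

variable {α : Type*} [MeasurableSpace α] {p q : Measure α}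

lemma klDiv_eq_coe_klDiv (p q : Measure α) [IsProbabilityMeasure p] [IsProbabilityMeasure q] :
    klDiv p q = (InformationTheory.klDiv p q : EReal) := by
  by_cases h : p ≪ q ∧ Integrable (llr p q) p
  · have hnonneg := InformationTheory.integral_llr_add_sub_measure_univ_nonneg h.1 h.2
    simp only [probReal_univ, add_sub_cancel_right] at hnonneg
    rw [klDiv, if_pos h, InformationTheory.klDiv_of_ac_of_integrable h.1 h.2]
    simp [EReal.coe_ennreal_ofReal, max_eq_left hnonneg]
  · rw [klDiv, if_neg h, InformationTheory.klDiv_eq_top_iff.mpr fun hac hint ↦ h ⟨hac, hint⟩]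
    rfl

lemma klDiv_nonneg [IsProbabilityMeasure p] [IsProbabilityMeasure q] : 0 ≤ klDiv p q := by
  rw [klDiv_eq_coe_klDiv]
  exact EReal.coe_ennreal_nonneg _

lemma klDiv_le_coe_iff [IsProbabilityMeasure p] [IsProbabilityMeasure q] {r : ℝ} (hr : 0 ≤ r) :
    klDiv p q ≤ (r : EReal) ↔ InformationTheory.klDiv p q ≤ ENNReal.ofReal r := by
  rw [klDiv_eq_coe_klDiv, ← EReal.coe_ennreal_le_coe_ennreal_iff, EReal.coe_ennreal_ofReal,
    max_eq_left hr]

end Comparison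

section AugmentedPath

variable {X : ℕ → Type} [∀ k, MeasurableSpace (X k)]

instance isProbabilityMeasure_augPathMeasure (μ : Measure (X 0)) [IsProbabilityMeasure μ]
    (κ : ∀ k, Kernel (AugPathSpace X k) (X (k + 1) × ℝ)) [∀ k, IsMarkovKernel (κ k)] (k : ℕ) :
    IsProbabilityMeasure (augPathMeasure μ κ k) := by
  induction k with
  | zero => assumption
  | succ k ih => exact inferInstanceAs (IsProbabilityMeasure (augPathMeasure μ κ k ⊗ₘ κ k))

lemma klDiv_augPathMeasure_le_sum (μ : Measure (X 0)) [IsProbabilityMeasure μ]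
    (κ κ' : ∀ k, Kernel (AugPathSpace X k) (X (k + 1) × ℝ))
    [∀ k, IsMarkovKernel (κ k)] [∀ k, IsMarkovKernel (κ' k)] {b : ℕ → ℝ≥0∞}
    (h : ∀ k x, InformationTheory.klDiv (κ k x) (κ' k x) ≤ b k) (N : ℕ) :
    InformationTheory.klDiv (augPathMeasure μ κ N) (augPathMeasure μ κ' N)
      ≤ ∑ k ∈ Finset.range N, b k := by
  induction N with
  | zero =>
    rw [Finset.sum_range_zero]
    exact (InformationTheory.klDiv_self (augPathMeasure μ κ 0)).le
  | succ N ih =>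
    rw [Finset.sum_range_succ]
    exact (InformationTheory.klDiv_compProd_le_add (h N)).trans (by gcongr)

end AugmentedPath

theorem klDiv_augmented_path_measure_le_general {X : ℕ → Type} [∀ k, MeasurableSpace (X k)]
    (N : ℕ) (σ : ℝ) (hσ : 0 < σ)
    (μ : Measure (X 0)) [IsProbabilityMeasure μ]
    (κ κbar : ∀ k, ProbabilityTheory.Kernel (AugPathSpace X k) (X (k + 1)))
    [∀ k, ProbabilityTheory.IsMarkovKernel (κ k)]
    [∀ k, ProbabilityTheory.IsMarkovKernel (κbar k)]
    (η Δ : ℕ → ℝ)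
    (hκ : ∀ k, ∀ h, klDiv (κ k h) (κbar k h) ≤ ((η (k + 1) : ℝ) : EReal))
    (ℓ δc : ∀ k, AugPathSpace X k → ℝ)
    (hδ : ∀ k, ∀ h, |δc k h| ≤ Δ (k + 1))
    (κaug κbaraug : ∀ k, ProbabilityTheory.Kernel (AugPathSpace X k) (X (k + 1) × ℝ))
    [∀ k, ProbabilityTheory.IsMarkovKernel (κaug k)]
    [∀ k, ProbabilityTheory.IsMarkovKernel (κbaraug k)]
    (hκaug : ∀ k, ∀ h, κaug k h
      = (κ k h).prod (gaussianReal (ℓ k h + δc k h) (σ ^ 2).toNNReal))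
    (hκbaraug : ∀ k, ∀ h, κbaraug k h
      = (κbar k h).prod (gaussianReal (ℓ k h) (σ ^ 2).toNNReal)) :
    klDiv (augPathMeasure μ κaug N) (augPathMeasure μ κbaraug N)
      ≤ ((∑ k ∈ Finset.Icc 1 N, (η k + (Δ k) ^ 2 / (2 * σ ^ 2)) : ℝ) : EReal) := by
  have hv : (σ ^ 2).toNNReal ≠ 0 := by simp [hσ.ne']
  have hη : ∀ k, 0 ≤ η (k + 1) := fun k ↦ by
    obtain ⟨h⟩ := nonempty_of_isProbabilityMeasure (augPathMeasure μ κaug k)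
    exact_mod_cast klDiv_nonneg.trans (hκ k h)
  have hc : ∀ k, 0 ≤ η (k + 1) + Δ (k + 1) ^ 2 / (2 * σ ^ 2) := fun k ↦ by
    have := hη k
    positivity
  have hstep : ∀ k h, InformationTheory.klDiv (κaug k h) (κbaraug k h)
      ≤ ENNReal.ofReal (η (k + 1) + Δ (k + 1) ^ 2 / (2 * σ ^ 2)) := fun k h ↦ by
    rw [hκaug, hκbaraug, ENNReal.ofReal_add (hη k) (by positivity)]
    refine InformationTheory.klDiv_prod_le_add.trans
      (add_le_add ((klDiv_le_coe_iff (hη k)).mp (hκ k h)) ?_)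
    simpa [Real.coe_toNNReal _ (sq_nonneg σ)] using
      InformationTheory.klDiv_gaussianReal_add_le (ℓ k h) (hδ k h) hv
  have hreindex : ∑ k ∈ Finset.Icc 1 N, (η k + Δ k ^ 2 / (2 * σ ^ 2))
      = ∑ k ∈ Finset.range N, (η (k + 1) + Δ (k + 1) ^ 2 / (2 * σ ^ 2)) := by
    rw [Finset.range_eq_Ico, Finset.sum_Ico_add' (fun k ↦ η k + Δ k ^ 2 / (2 * σ ^ 2)) 0 N 1]
    rfl
  rw [hreindex, klDiv_le_coe_iff (Finset.sum_nonneg fun k _ ↦ hc k),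
    ENNReal.ofReal_sum_of_nonneg fun k _ ↦ hc k]
  exact klDiv_augPathMeasure_le_sum μ κaug κbaraug hstep N

/-- Joint robustness to dynamics and cost perturbations (Steps 1–2 of Theorem 1): if each
dynamics kernel lies within KL radius `η_k` of its nominal model and each stage cost is
perturbed by at most `Δ_k` and fed through a Gaussian running-cost channel of variance `σ²`,
then the augmented path measures over horizon `N` satisfy
`D_KL(true path ‖ nominal path) ≤ ∑_{k=1}^N (η_k + Δ_k²/(2σ²))`. -/
theorem klDiv_augmented_path_measure_le {X : ℕ → Type} [∀ k, MeasurableSpace (X k)]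
    (N : ℕ) (hN : 1 ≤ N) (σ : ℝ) (hσ : 0 < σ)
    (μ : Measure (X 0)) [IsProbabilityMeasure μ]
    (κ κbar : ∀ k, ProbabilityTheory.Kernel (AugPathSpace X k) (X (k + 1)))
    [∀ k, ProbabilityTheory.IsMarkovKernel (κ k)]
    [∀ k, ProbabilityTheory.IsMarkovKernel (κbar k)]
    (η Δ : ℕ → ℝ)
    (hκ : ∀ k, ∀ h, klDiv (κ k h) (κbar k h) ≤ ((η (k + 1) : ℝ) : EReal))
    (ℓ δc : ∀ k, AugPathSpace X k → ℝ)
    (hℓ : ∀ k, Measurable (ℓ k)) (hδc : ∀ k, Measurable (δc k))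
    (hδ : ∀ k, ∀ h, |δc k h| ≤ Δ (k + 1))
    (κaug κbaraug : ∀ k, ProbabilityTheory.Kernel (AugPathSpace X k) (X (k + 1) × ℝ))
    [∀ k, ProbabilityTheory.IsMarkovKernel (κaug k)]
    [∀ k, ProbabilityTheory.IsMarkovKernel (κbaraug k)]
    (hκaug : ∀ k, ∀ h, κaug k h
      = (κ k h).prod (gaussianReal (ℓ k h + δc k h) (σ ^ 2).toNNReal))
    (hκbaraug : ∀ k, ∀ h, κbaraug k h
      = (κbar k h).prod (gaussianReal (ℓ k h) (σ ^ 2).toNNReal)) :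
    klDiv (augPathMeasure μ κaug N) (augPathMeasure μ κbaraug N)
      ≤ ((∑ k ∈ Finset.Icc 1 N, (η k + (Δ k) ^ 2 / (2 * σ ^ 2)) : ℝ) : EReal) :=
  klDiv_augmented_path_measure_le_general N σ hσ μ κ κbar η Δ hκ ℓ δc hδ κaug κbaraug hκaug hκbaraug
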